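/- arXiv:0905.0982 — 2 statements merged into one kernel-verified Lean document; each statement's English description precedes it below -/
import Mathlib

section
/- Let g : ℝ → ℝ be C¹ with |g| ≤ M and |g'| ≤ N. For ε > 0 let f solve the ODE f'' + f = g(εt) with zero initial data f(0) = f'(0) = 0. Then there exists a constant C = C(M,N) such that the energy E(t) = (f(t)² + f'(t)²)/2 satisfies E(t) ≤ C for all 0 ≤ t ≤ 1/ε. -/
/-!
Since `E' = f' h` for the forcing `h(t) = g(εt)`, integrating by parts gives
`E(t) = f(t) h(t) - ∫₀ᵗ f h'`, and `|h'| ≤ εN` makes the integral at most `N · max |f|`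
as long as `t ≤ 1/ε`. Hence `E ≤ (M + N) A` on `[0, 1/ε]`, where `A` is the maximum of `|f|`
there; at a point where `|f| = A` this reads `A² / 2 ≤ (M + N) A`, so `A ≤ 2 (M + N)` and
`E ≤ 2 (M + N)²`.
-/

open Set intervalIntegral

noncomputable def harmonicEnergy (f : ℝ → ℝ) (t : ℝ) : ℝ := (f t ^ 2 + deriv f t ^ 2) / 2

section Oscillator

variable {f h : ℝ → ℝ}

lemma sq_le_two_mul_harmonicEnergy (f : ℝ → ℝ) (t : ℝ) :
    f t ^ 2 ≤ 2 * harmonicEnergy f t := by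
  unfold harmonicEnergy
  nlinarith [sq_nonneg (deriv f t)]

lemma hasDerivAt_harmonicEnergy (hf : ContDiff ℝ 2 f)
    (hode : ∀ t, deriv (deriv f) t + f t = h t) (t : ℝ) :
    HasDerivAt (harmonicEnergy f) (deriv f t * h t) t := by
  have hf' : HasDerivAt f (deriv f t) t := (hf.differentiable two_ne_zero t).hasDerivAt
  have hf'' : HasDerivAt (deriv f) (deriv (deriv f) t) t :=
    (hf.differentiable_deriv_two t).hasDerivAt
  refine (((hf'.pow 2).add (hf''.pow 2)).div_const 2).congr_deriv ?_
  rw [← hode t]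
  ring

lemma harmonicEnergy_sub (hf : ContDiff ℝ 2 f) (hh : ContDiff ℝ 1 h)
    (hode : ∀ t, deriv (deriv f) t + f t = h t) (a b : ℝ) :
    harmonicEnergy f b - harmonicEnergy f a =
      f b * h b - f a * h a - ∫ s in a..b, f s * deriv h s := by
  have hf'c : Continuous (deriv f) := hf.continuous_deriv (by norm_num)
  rw [← integral_eq_sub_of_hasDerivAt (fun t _ => hasDerivAt_harmonicEnergy hf hode t)
      ((hf'c.mul hh.continuous).intervalIntegrable a b),
    integral_mul_deriv_eq_deriv_mul
      (fun t _ => (hf.differentiable two_ne_zero t).hasDerivAt)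
      (fun t _ => (hh.differentiable one_ne_zero t).hasDerivAt)
      (hf'c.intervalIntegrable a b) ((hh.continuous_deriv le_rfl).intervalIntegrable a b)]
  ring

lemma harmonicEnergy_le (hf : ContDiff ℝ 2 f) (hh : ContDiff ℝ 1 h)
    (hode : ∀ t, deriv (deriv f) t + f t = h t) (hf0 : f 0 = 0) (hf'0 : deriv f 0 = 0)
    {M K A T : ℝ} (hM : ∀ t, |h t| ≤ M) (hK : ∀ t, |deriv h t| ≤ K)
    (hA : ∀ s ∈ Icc 0 T, |f s| ≤ A) {t : ℝ} (ht : t ∈ Icc 0 T) :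
    harmonicEnergy f t ≤ M * A + K * T * A := by
  have hA0 : 0 ≤ A := (abs_nonneg _).trans (hA t ht)
  have hE : harmonicEnergy f t = f t * h t - ∫ s in (0 : ℝ)..t, f s * deriv h s := by
    have := harmonicEnergy_sub hf hh hode 0 t
    simp only [harmonicEnergy, hf0, hf'0] at this ⊢
    linarith
  have hforce : f t * h t ≤ M * A :=
    calc f t * h t ≤ |f t| * |h t| := (le_abs_self _).trans (abs_mul _ _).le
      _ ≤ A * M := mul_le_mul (hA t ht) (hM t) (abs_nonneg _) hA0
      _ = M * A := mul_comm _ _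
  have hint : |∫ s in (0 : ℝ)..t, f s * deriv h s| ≤ K * T * A :=
    calc |∫ s in (0 : ℝ)..t, f s * deriv h s| ≤ A * K * |t - 0| := by
          rw [← Real.norm_eq_abs]
          refine norm_integral_le_of_norm_le_const fun s hs => ?_
          rw [uIoc_of_le ht.1] at hs
          rw [Real.norm_eq_abs, abs_mul]
          exact mul_le_mul (hA s ⟨hs.1.le, hs.2.trans ht.2⟩) (hK s) (abs_nonneg _) hA0
      _ ≤ K * T * A := by
          rw [sub_zero, abs_of_nonneg ht.1]
          have hK0 : 0 ≤ K := (abs_nonneg _).trans (hK 0)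
          nlinarith [mul_nonneg hA0 hK0, ht.2]
  rw [hE]
  linarith [neg_abs_le (∫ s in (0 : ℝ)..t, f s * deriv h s)]

end Oscillator

/-- Averaging lemma: a slowly varying forcing `g(εt)` with `|g| ≤ M`, `|g'| ≤ N`
influences the harmonic oscillator `f'' + f = g(εt)`, `f(0) = f'(0) = 0`, so that
the energy `E(t) = (f(t)² + f'(t)²)/2` stays bounded by a constant `C = C(M,N)`
on the time interval `[0, 1/ε]`. -/
theorem stmt1 (M N : ℝ) :
    ∃ C : ℝ, ∀ (g f : ℝ → ℝ) (ε : ℝ), 0 < ε →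
      ContDiff ℝ 1 g → (∀ t, |g t| ≤ M) → (∀ t, |deriv g t| ≤ N) →
      ContDiff ℝ 2 f →
      (∀ t, deriv (deriv f) t + f t = g (ε * t)) →
      f 0 = 0 → deriv f 0 = 0 →
      ∀ t ∈ Set.Icc (0:ℝ) (1/ε), ((f t) ^ 2 + (deriv f t) ^ 2) / 2 ≤ C := by
  refine ⟨2 * (M + N) ^ 2, fun g f ε hε hg hgM hgN hf hode hf0 hf'0 t ht => ?_⟩
  have hMN : 0 ≤ M + N :=
    add_nonneg ((abs_nonneg _).trans (hgM 0)) ((abs_nonneg _).trans (hgN 0))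
  have hh : ContDiff ℝ 1 fun s => g (ε * s) := hg.comp (contDiff_const.mul contDiff_id)
  have hhK : ∀ s, |deriv (fun s => g (ε * s)) s| ≤ ε * N := fun s => by
    rw [deriv_comp_mul_left, smul_eq_mul, abs_mul, abs_of_pos hε]
    exact mul_le_mul_of_nonneg_left (hgN _) hε.le
  obtain ⟨t₁, ht₁, hmax⟩ := isCompact_Icc.exists_isMaxOn ⟨t, ht⟩
    (continuous_abs.comp hf.continuous).continuousOn
  have hE : ∀ s ∈ Icc 0 (1 / ε), harmonicEnergy f s ≤ (M + N) * |f t₁| := fun s hs => by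
    have := harmonicEnergy_le hf hh hode hf0 hf'0 (fun _ => hgM _) hhK (fun u hu => hmax hu) hs
    have hεN : ε * N * (1 / ε) = N := by field_simp
    rwa [hεN, ← add_mul] at this
  have hA : |f t₁| ≤ 2 * (M + N) := by
    have hsq := sq_le_two_mul_harmonicEnergy f t₁
    rw [← sq_abs] at hsq
    nlinarith [hE t₁ ht₁, abs_nonneg (f t₁)]
  calc harmonicEnergy f t ≤ (M + N) * |f t₁| := hE t ht
    _ ≤ 2 * (M + N) ^ 2 := by nlinarith
end

section
/- Let f ∈ C_c^∞(ℝ³) and suppose e, ω are real numbers with ωe > 0. If α is a classical solution of −Δα + e²f²α = eωf² on ℝ³ decaying at infinity, then 0 ≤ α ≤ ω/e everywhere. Similarly, if ωe < 0 then 0 ≥ α ≥ ω/e. In particular ‖α‖_{L^∞} ≤ |ω/e|. -/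
open MeasureTheory

local notation "E3" => EuclideanSpace ℝ (Fin 3)

/-- Partial derivative in the `i`-th coordinate direction. -/
noncomputable def pd (i : Fin 3) (g : EuclideanSpace ℝ (Fin 3) → ℝ)
    (x : EuclideanSpace ℝ (Fin 3)) : ℝ :=
  fderiv ℝ g x (EuclideanSpace.single i 1)

/-- The Laplacian on `ℝ³`. -/
noncomputable def lap (g : EuclideanSpace ℝ (Fin 3) → ℝ)
    (x : EuclideanSpace ℝ (Fin 3)) : ℝ :=
  ∑ i : Fin 3, pd i (fun y => pd i g y) x

noncomputable def qq (x : E3) : ℝ := 1 + ‖x‖ ^ 2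

noncomputable def uu (x : E3) : ℝ := qq x ^ (-(1/2) : ℝ)

lemma qq_pos (x : E3) : 0 < qq x := by
  have := sq_nonneg ‖x‖; unfold qq; nlinarith

lemma qq_ne (x : E3) : qq x ≠ 0 := (qq_pos x).ne'

lemma hasFDerivAt_qq (x : E3) :
    HasFDerivAt qq (2 • (innerSL ℝ x)) x :=
  (hasStrictFDerivAt_norm_sq x).hasFDerivAt.const_add 1

lemma uu_pos (x : E3) : 0 < uu x := Real.rpow_pos_of_pos (qq_pos x) _

lemma uu_le_one (x : E3) : uu x ≤ 1 := by
  apply Real.rpow_le_one_of_one_le_of_nonpos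
  · have := sq_nonneg ‖x‖; unfold qq; linarith
  · norm_num

lemma contDiff_qq : ContDiff ℝ 2 qq :=
  contDiff_const.add (contDiff_norm_sq ℝ)

lemma contDiff_uu : ContDiff ℝ 2 uu :=
  contDiff_iff_contDiffAt.mpr fun x =>
    contDiff_qq.contDiffAt.rpow_const_of_ne (qq_ne x)

lemma uu_tendsto : Filter.Tendsto uu (Filter.cocompact E3) (nhds 0) := by
  have h1 : Filter.Tendsto (fun x : E3 => ‖x‖) (Filter.cocompact E3) Filter.atTop :=
    tendsto_norm_cocompact_atTop
  have h2 : Filter.Tendsto qq (Filter.cocompact E3) Filter.atTop := by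
    apply Filter.tendsto_atTop_mono _ h1
    intro x
    have := sq_nonneg (‖x‖ - 1); unfold qq; nlinarith
  have h3 : Filter.Tendsto (fun t : ℝ => t ^ (-(1/2) : ℝ)) Filter.atTop (nhds 0) := by
    have := tendsto_rpow_neg_atTop (y := 1/2) (by norm_num)
    simpa using this
  exact h3.comp h2

lemma pd_uu (i : Fin 3) (x : E3) :
    pd i uu x = -(x i) * qq x ^ (-(3/2) : ℝ) := by
  have h : HasFDerivAt uu
      ((-(1/2) * qq x ^ ((-(1/2) : ℝ) - 1)) • (2 • (innerSL ℝ x))) x :=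
    (hasFDerivAt_qq x).rpow_const (Or.inl (qq_ne x))
  unfold pd
  rw [h.fderiv, show ((-(1/2) : ℝ) - 1) = (-(3/2) : ℝ) by norm_num]
  simp [EuclideanSpace.inner_single_right, real_inner_comm]
  ring

lemma pd_pd_uu (i : Fin 3) (x : E3) :
    pd i (fun y => pd i uu y) x
      = 3 * (x i) ^ 2 * qq x ^ (-(5/2) : ℝ) - qq x ^ (-(3/2) : ℝ) := by
  have hfun : (fun y => pd i uu y) = fun y => -(y i) * qq y ^ (-(3/2) : ℝ) :=
    funext fun y => pd_uu i y
  rw [hfun]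
  have ha : HasFDerivAt (fun y : E3 => -(y i))
      (-(EuclideanSpace.proj i : E3 →L[ℝ] ℝ)) x :=
    (EuclideanSpace.proj i : E3 →L[ℝ] ℝ).hasFDerivAt.neg
  have hb : HasFDerivAt (fun y : E3 => qq y ^ (-(3/2) : ℝ))
      ((-(3/2) * qq x ^ ((-(3/2) : ℝ) - 1)) • (2 • (innerSL ℝ x))) x :=
    (hasFDerivAt_qq x).rpow_const (Or.inl (qq_ne x))
  have h := ha.fun_mul hb
  unfold pd
  rw [h.fderiv, show ((-(3/2) : ℝ) - 1) = (-(5/2) : ℝ) by norm_num]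
  simp [EuclideanSpace.inner_single_right, real_inner_comm]
  have hq35 : qq x ^ (-(3/2) : ℝ) = qq x * qq x ^ (-(5/2) : ℝ) := by
    rw [← Real.rpow_one_add' (qq_pos x).le (by norm_num)]
    norm_num
  rw [hq35]; unfold qq; ring

lemma lap_uu (x : E3) : lap uu x = -3 * qq x ^ (-(5/2) : ℝ) := by
  unfold lap
  rw [Finset.sum_congr rfl (fun i _ => pd_pd_uu i x)]
  have hnorm : ‖x‖ ^ 2 = ∑ i : Fin 3, (x i) ^ 2 := by
    rw [EuclideanSpace.norm_eq, Real.sq_sqrt (by positivity)]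
    simp [Real.norm_eq_abs, sq_abs]
  have hq35 : qq x ^ (-(3/2) : ℝ) = qq x * qq x ^ (-(5/2) : ℝ) := by
    rw [← Real.rpow_one_add' (qq_pos x).le (by norm_num)]
    norm_num
  rw [Finset.sum_sub_distrib]
  have e1 : ∑ i : Fin 3, 3 * (x i) ^ 2 * qq x ^ (-(5/2) : ℝ)
      = 3 * ‖x‖ ^ 2 * qq x ^ (-(5/2) : ℝ) := by
    rw [hnorm, Finset.mul_sum, Finset.sum_mul]
  rw [e1]
  simp only [Finset.sum_const, Finset.card_univ, Fintype.card_fin, nsmul_eq_mul]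
  rw [hq35]
  unfold qq
  ring

lemma lap_uu_neg (x : E3) : lap uu x < 0 := by
  rw [lap_uu]
  have := Real.rpow_pos_of_pos (qq_pos x) (-(5/2) : ℝ)
  linarith

lemma contDiff_pd (g : E3 → ℝ) (hg : ContDiff ℝ 2 g) (i : Fin 3) :
    ContDiff ℝ 1 (pd i g) :=
  (hg.fderiv_right (by norm_num)).clm_apply contDiff_const

lemma pd_add_mul (g h : E3 → ℝ) (hg : Differentiable ℝ g) (hh : Differentiable ℝ h)
    (c : ℝ) (i : Fin 3) (x : E3) :
    pd i (fun y => g y + c * h y) x = pd i g x + c * pd i h x := by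
  have hd := (hg x).hasFDerivAt.fun_add ((hh x).hasFDerivAt.const_mul c)
  unfold pd
  rw [hd.fderiv]
  simp

lemma lap_add_mul (g h : E3 → ℝ) (hg : ContDiff ℝ 2 g) (hh : ContDiff ℝ 2 h)
    (c : ℝ) (x : E3) :
    lap (fun y => g y + c * h y) x = lap g x + c * lap h x := by
  unfold lap
  rw [Finset.mul_sum, ← Finset.sum_add_distrib]
  apply Finset.sum_congr rfl
  intro i _
  have hgd : Differentiable ℝ g := hg.differentiable (by norm_num)
  have hhd : Differentiable ℝ h := hh.differentiable (by norm_num)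
  have hfun : (fun y => pd i (fun z => g z + c * h z) y)
      = fun y => pd i g y + c * pd i h y :=
    funext fun y => pd_add_mul g h hgd hhd c i y
  rw [hfun]
  exact pd_add_mul (pd i g) (pd i h)
    ((contDiff_pd g hg i).differentiable one_ne_zero)
    ((contDiff_pd h hh i).differentiable one_ne_zero) c i x

lemma lap_neg_fun (g : E3 → ℝ) (x : E3) :
    lap (fun y => -(g y)) x = - lap g x := by
  unfold lap
  rw [← Finset.sum_neg_distrib]
  apply Finset.sum_congr rfl
  intro i _
  have hfun : (fun y => pd i (fun z => -(g z)) y) = fun y => -(pd i g y) := by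
    funext y
    unfold pd
    rw [fderiv_fun_neg]
    simp
  rw [hfun]
  unfold pd
  rw [fderiv_fun_neg]
  simp

/-- Second derivative is nonnegative at a global minimum of a C² function. -/
lemma second_deriv_nonneg (g : ℝ → ℝ) (hg : ContDiff ℝ 2 g)
    (hmin : ∀ t, g 0 ≤ g t) : 0 ≤ deriv (deriv g) 0 := by
  by_contra hcon
  push_neg at hcon
  have hdg : ContDiff ℝ 1 (deriv g) := by
    have h2 : ContDiff ℝ ((1 : ℕ) + 1 : ℕ) g := by exact_mod_cast hg
    exact (contDiff_succ_iff_deriv.mp h2).2.2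
  have hcont : Continuous (deriv (deriv g)) := hdg.continuous_deriv le_rfl
  have hopen : IsOpen {t : ℝ | deriv (deriv g) t < 0} :=
    isOpen_lt hcont continuous_const
  obtain ⟨δ, hδ, hball⟩ := Metric.isOpen_iff.mp hopen 0 hcon
  have hδ'pos : 0 < δ / 2 := by positivity
  have hsub : Set.Icc (0 : ℝ) (δ / 2) ⊆ Metric.ball 0 δ := by
    intro t ht
    simp only [Metric.mem_ball, Real.dist_eq, sub_zero]
    rcases ht with ⟨h1, h2⟩
    rw [abs_of_nonneg h1]
    linarith
  have hanti : StrictAntiOn (deriv g) (Set.Icc (0 : ℝ) (δ / 2)) := by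
    apply strictAntiOn_of_deriv_neg (convex_Icc _ _) (hdg.continuous.continuousOn)
    intro t ht
    rw [interior_Icc] at ht
    exact hball (hsub ⟨ht.1.le, ht.2.le⟩)
  have h0 : deriv g 0 = 0 := by
    have : IsLocalMin g 0 := Filter.Eventually.of_forall hmin
    exact this.deriv_eq_zero
  have hganti : StrictAntiOn g (Set.Icc (0 : ℝ) (δ / 2)) := by
    apply strictAntiOn_of_deriv_neg (convex_Icc _ _) (hg.continuous.continuousOn)
    intro t ht
    rw [interior_Icc] at ht
    have := hanti (Set.left_mem_Icc.mpr hδ'pos.le) ⟨ht.1.le, ht.2.le⟩ ht.1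
    rw [h0] at this
    exact this
  have := hganti (Set.left_mem_Icc.mpr hδ'pos.le) (Set.right_mem_Icc.mpr hδ'pos.le) hδ'pos
  exact absurd this (not_lt.mpr (hmin (δ / 2)))

/-- The Laplacian is nonnegative at a global minimum of a C² function. -/
lemma lap_nonneg_at_min (β : E3 → ℝ) (hβ : ContDiff ℝ 2 β) (x₁ : E3)
    (hmin : ∀ x, β x₁ ≤ β x) : 0 ≤ lap β x₁ := by
  unfold lap
  apply Finset.sum_nonneg
  intro i _
  set v : E3 := EuclideanSpace.single i (1 : ℝ) with hv
  set ℓ : ℝ → E3 := fun t => x₁ + t • v with hℓdef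
  have hℓ : ∀ t, HasDerivAt ℓ v t := by
    intro t
    have h1 : HasDerivAt (fun t : ℝ => t • v) ((1 : ℝ) • v) t :=
      (hasDerivAt_id t).smul_const v
    have h2 := h1.const_add x₁
    simpa [hℓdef] using h2
  have hℓ0 : ℓ 0 = x₁ := by simp [hℓdef]
  have hℓC : ContDiff ℝ 2 ℓ :=
    contDiff_const.add (contDiff_id.smul contDiff_const)
  have hβd : Differentiable ℝ β := hβ.differentiable (by norm_num)
  have hpd : ContDiff ℝ 1 (pd i β) := contDiff_pd β hβ i
  have hg1 : ∀ t, HasDerivAt (fun t => β (ℓ t)) (pd i β (ℓ t)) t := fun t =>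
    (hβd (ℓ t)).hasFDerivAt.comp_hasDerivAt t (hℓ t)
  have hdg : deriv (fun t => β (ℓ t)) = fun t => pd i β (ℓ t) :=
    funext fun t => (hg1 t).deriv
  have hg2 : HasDerivAt (fun t => pd i β (ℓ t)) (pd i (fun y => pd i β y) x₁) 0 := by
    have h := ((hpd.differentiable one_ne_zero) (ℓ 0)).hasFDerivAt.comp_hasDerivAt 0 (hℓ 0)
    rw [hℓ0] at h
    exact h
  have hgC : ContDiff ℝ 2 (fun t => β (ℓ t)) := hβ.comp hℓC
  have hmin' : ∀ t, β (ℓ 0) ≤ β (ℓ t) := fun t => by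
    rw [hℓ0]; exact hmin (ℓ t)
  have := second_deriv_nonneg (fun t => β (ℓ t)) hgC hmin'
  rw [hdg] at this
  rwa [hg2.deriv] at this

/-- Existence of a global minimum for a continuous function tending to 0
at infinity and taking a negative value. -/
lemma exists_global_min (β : E3 → ℝ) (hc : Continuous β)
    (hd : Filter.Tendsto β (Filter.cocompact E3) (nhds 0))
    (x₀ : E3) (h0 : β x₀ < 0) : ∃ x₁, ∀ x, β x₁ ≤ β x := by
  have hmem : β ⁻¹' Metric.ball 0 (-β x₀) ∈ Filter.cocompact E3 :=
    hd (Metric.ball_mem_nhds 0 (by linarith : (0:ℝ) < -β x₀))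
  obtain ⟨K, hK, hKs⟩ := Filter.hasBasis_cocompact.mem_iff.mp hmem
  have habs : ∀ x ∉ K, |β x| < -β x₀ := by
    intro x hx
    have := hKs hx
    simpa [Metric.mem_ball, Real.dist_eq] using this
  have hx₀K : x₀ ∈ K := by
    by_contra h
    have := habs x₀ h
    rw [abs_of_neg h0] at this
    exact lt_irrefl _ this
  obtain ⟨x₁, hx₁K, hmin⟩ := hK.exists_isMinOn ⟨x₀, hx₀K⟩ hc.continuousOn
  refine ⟨x₁, fun x => ?_⟩
  by_cases hx : x ∈ K
  · exact hmin hx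
  · have h1 := habs x hx
    have h2 : β x₁ ≤ β x₀ := hmin hx₀K
    have h3 : -(β x) ≤ |β x| := neg_le_abs _
    linarith

/-- Core maximum-principle bound in the case `0 < ω e`. -/
lemma core_bound (f α : E3 → ℝ) (e ω : ℝ)
    (hα : ContDiff ℝ 2 α)
    (hdecay : Filter.Tendsto α (Filter.cocompact E3) (nhds 0))
    (heq : ∀ x, - lap α x + e ^ 2 * (f x) ^ 2 * α x = e * ω * (f x) ^ 2)
    (hωe : 0 < ω * e) : ∀ x, 0 ≤ α x ∧ α x ≤ ω / e := by
  have he : e ≠ 0 := by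
    intro h; rw [h] at hωe; simp at hωe
  have he2 : (0 : ℝ) < e ^ 2 := by positivity
  have hωe' : 0 < ω / e := by
    have h : ω / e = ω * e / e ^ 2 := by field_simp
    rw [h]; exact div_pos hωe he2
  have hβten : ∀ c : ℝ, Filter.Tendsto (fun x => α x + c * uu x)
      (Filter.cocompact E3) (nhds 0) := by
    intro c
    have := hdecay.add (uu_tendsto.const_mul c)
    simpa using this
  have hβcd : ∀ c : ℝ, ContDiff ℝ 2 (fun x => α x + c * uu x) := fun c =>
    hα.add (contDiff_const.mul contDiff_uu)
  have hlow : ∀ x, 0 ≤ α x := by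
    by_contra hcon
    push_neg at hcon
    obtain ⟨x₀, hx₀⟩ := hcon
    have hεpos : 0 < -α x₀ / 2 := by linarith
    set ε : ℝ := -α x₀ / 2 with hε
    have hβ0 : α x₀ + ε * uu x₀ < 0 := by
      have h1 : ε * uu x₀ ≤ ε * 1 :=
        mul_le_mul_of_nonneg_left (uu_le_one x₀) hεpos.le
      rw [hε] at h1 ⊢
      linarith
    obtain ⟨x₁, hmin0⟩ := exists_global_min (fun x => α x + ε * uu x)
      (hβcd ε).continuous (hβten ε) x₀ hβ0
    have hmin : ∀ x, α x₁ + ε * uu x₁ ≤ α x + ε * uu x := hmin0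
    have hαx₁ : α x₁ < 0 := by
      have h1 : 0 < ε * uu x₁ := mul_pos hεpos (uu_pos x₁)
      have h2 := hmin x₀
      linarith
    have hl : 0 ≤ lap (fun x => α x + ε * uu x) x₁ :=
      lap_nonneg_at_min _ (hβcd ε) x₁ hmin0
    have hls : lap (fun x => α x + ε * uu x) x₁ = lap α x₁ + ε * lap uu x₁ :=
      lap_add_mul α uu hα contDiff_uu ε x₁
    have hlapu := lap_uu_neg x₁
    have heq1 := heq x₁
    have t1 : e ^ 2 * f x₁ ^ 2 * α x₁ ≤ 0 :=
      mul_nonpos_of_nonneg_of_nonpos (by positivity) hαx₁.le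
    have t2 : 0 ≤ e * ω * f x₁ ^ 2 := by
      have h : e * ω = ω * e := by ring
      rw [h]; exact mul_nonneg hωe.le (sq_nonneg _)
    nlinarith [mul_pos hεpos (neg_pos.mpr hlapu)]
  have hhigh : ∀ x, α x ≤ ω / e := by
    by_contra hcon
    push_neg at hcon
    obtain ⟨x₀, hx₀⟩ := hcon
    have hεpos : 0 < (α x₀ - ω / e) / 2 := by linarith
    set ε : ℝ := (α x₀ - ω / e) / 2 with hε
    have hβ0 : ω / e < α x₀ + (-ε) * uu x₀ := by
      have h1 : ε * uu x₀ ≤ ε * 1 :=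
        mul_le_mul_of_nonneg_left (uu_le_one x₀) hεpos.le
      rw [hε] at h1 ⊢
      linarith
    have hγten : Filter.Tendsto (fun x => -(α x + (-ε) * uu x))
        (Filter.cocompact E3) (nhds 0) := by
      simpa only [neg_zero] using (hβten (-ε)).neg
    have hγc : ContDiff ℝ 2 (fun x => -(α x + (-ε) * uu x)) := (hβcd (-ε)).neg
    have hγ0 : -(α x₀ + (-ε) * uu x₀) < 0 := by linarith
    obtain ⟨x₁, hmin0⟩ := exists_global_min (fun x => -(α x + (-ε) * uu x))
      hγc.continuous hγten x₀ hγ0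
    have hmax : ∀ x, α x + (-ε) * uu x ≤ α x₁ + (-ε) * uu x₁ := by
      intro x
      have := hmin0 x
      simp only [neg_le_neg_iff] at this
      linarith [hmin0 x]
    have hαx₁ : ω / e < α x₁ := by
      have h1 : 0 < ε * uu x₁ := mul_pos hεpos (uu_pos x₁)
      have h2 := hmax x₀
      linarith
    have hl : 0 ≤ lap (fun x => -(α x + (-ε) * uu x)) x₁ :=
      lap_nonneg_at_min _ hγc x₁ hmin0
    have hlneg : lap (fun x => -(α x + (-ε) * uu x)) x₁
        = - lap (fun x => α x + (-ε) * uu x) x₁ :=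
      lap_neg_fun (fun x => α x + (-ε) * uu x) x₁
    have hls : lap (fun x => α x + (-ε) * uu x) x₁ = lap α x₁ + (-ε) * lap uu x₁ :=
      lap_add_mul α uu hα contDiff_uu (-ε) x₁
    have hlapu := lap_uu_neg x₁
    have heq1 := heq x₁
    have t1 : e * ω ≤ e ^ 2 * α x₁ := by
      have h3 : e ^ 2 * (ω / e) = e * ω := by field_simp
      nlinarith
    have t2 : 0 ≤ f x₁ ^ 2 * (e ^ 2 * α x₁ - e * ω) :=
      mul_nonneg (sq_nonneg _) (by linarith)
    nlinarith [mul_pos hεpos (neg_pos.mpr hlapu)]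
  exact fun x => ⟨hlow x, hhigh x⟩

/-- Maximum-principle bound for the soliton electrostatic potential: if
`f ∈ C_c^∞(ℝ³)` and `α` is a classical solution of `−Δα + e²f²α = eωf²`
decaying at infinity, then `0 ≤ α ≤ ω/e` when `ωe > 0`, `ω/e ≤ α ≤ 0` when
`ωe < 0`, and in particular `‖α‖_{L^∞} ≤ |ω/e|`. -/
theorem stmt5 (f α : E3 → ℝ) (e ω : ℝ)
    (hf : ContDiff ℝ (⊤ : ℕ∞) f) (hfc : HasCompactSupport f)
    (hα : ContDiff ℝ 2 α)
    (hdecay : Filter.Tendsto α (Filter.cocompact E3) (nhds 0))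
    (heq : ∀ x, - lap α x + e ^ 2 * (f x) ^ 2 * α x = e * ω * (f x) ^ 2) :
    (0 < ω * e → ∀ x, 0 ≤ α x ∧ α x ≤ ω / e) ∧
    (ω * e < 0 → ∀ x, ω / e ≤ α x ∧ α x ≤ 0) ∧
    (ω * e ≠ 0 → ∀ x, |α x| ≤ |ω / e|) := by
  have hpos : 0 < ω * e → ∀ x, 0 ≤ α x ∧ α x ≤ ω / e := fun h =>
    core_bound f α e ω hα hdecay heq h
  have hneg : ω * e < 0 → ∀ x, ω / e ≤ α x ∧ α x ≤ 0 := by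
    intro h
    have h' : 0 < (-ω) * e := by linarith
    have hα' : ContDiff ℝ 2 (fun x => -(α x)) := hα.neg
    have hdecay' : Filter.Tendsto (fun x => -(α x)) (Filter.cocompact E3) (nhds 0) := by
      simpa only [neg_zero] using hdecay.neg
    have heq' : ∀ x, - lap (fun y => -(α y)) x
        + e ^ 2 * (f x) ^ 2 * (-(α x)) = e * (-ω) * (f x) ^ 2 := by
      intro x
      rw [lap_neg_fun α x]
      have := heq x
      linarith [heq x]
    have hres := core_bound f (fun x => -(α x)) e (-ω) hα' hdecay' heq' h'
    intro x
    have h1 : 0 ≤ -(α x) := (hres x).1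
    have h2 : -(α x) ≤ (-ω) / e := (hres x).2
    have h3 : (-ω) / e = -(ω / e) := by ring
    rw [h3] at h2
    constructor <;> linarith
  refine ⟨hpos, hneg, ?_⟩
  intro h x
  rcases lt_or_gt_of_ne h with hlt | hgt
  · obtain ⟨h1, h2⟩ := hneg hlt x
    rw [abs_le]
    have := neg_abs_le (ω / e)
    have := abs_nonneg (ω / e)
    constructor <;> linarith
  · obtain ⟨h1, h2⟩ := hpos hgt x
    rw [abs_le]
    have := le_abs_self (ω / e)
    have := abs_nonneg (ω / e)
    constructor <;> linarith
end
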